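/- arXiv:2405.03310 — 2 statements merged into one kernel-verified Lean document; each statement's English description precedes it below -/
import Mathlib

section
/- Let Γ be a locally semicomplete commutative weakly distance-regular digraph such that (1,2) is pure. If there exist vertices x,y,z and integers i > 1 and q > 0 with ∂̃(x,y)=(1,2), ∂̃(y,z)=(1,q) and ∂̃(x,z)=(2,i), then i = 2 and q ∈ {2,3}. -/
variable {V : Type*}

/-- There is a directed walk of length `n` from `x` to `y` in the digraph with arc relation `A`. -/
def HasWalk (A : V → V → Prop) : ℕ → V → V → Prop
  | 0, x, y => x = y
  | n + 1, x, y => ∃ z, A x z ∧ HasWalk A n z y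

/-- The distance `∂(x,y)`: the length of a shortest directed path from `x` to `y`. -/
noncomputable def ddist (A : V → V → Prop) (x y : V) : ℕ :=
  sInf {n : ℕ | HasWalk A n x y}

/-- The two-way distance `∂̃(x,y) = (∂(x,y), ∂(y,x))`. -/
noncomputable def tdist (A : V → V → Prop) (x y : V) : ℕ × ℕ :=
  (ddist A x y, ddist A y x)

/-- The two-way distance set `∂̃(Γ)`. -/
def tset (A : V → V → Prop) : Set (ℕ × ℕ) :=
  {d : ℕ × ℕ | ∃ x y : V, tdist A x y = d}

/-- A (finite) weakly distance-regular digraph: a loopless strongly connected digraph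
together with its intersection numbers `p h i j = p^{h}_{i,j}`, where
`p h i j = 0` by convention whenever one of `h`, `i`, `j` is not a two-way distance. -/
structure WDRDigraph (V : Type*) [Fintype V] where
  Adj : V → V → Prop
  loopless : ∀ v : V, ¬ Adj v v
  strongly_connected : ∀ x y : V, ∃ n : ℕ, HasWalk Adj n x y
  p : ℕ × ℕ → ℕ × ℕ → ℕ × ℕ → ℕ
  card_inter : ∀ (i j : ℕ × ℕ) (x y : V),
    {z : V | tdist Adj x z = i ∧ tdist Adj z y = j}.ncard = p (tdist Adj x y) i j
  p_not_in : ∀ h i j : ℕ × ℕ,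
    h ∉ tset Adj ∨ i ∉ tset Adj ∨ j ∉ tset Adj → p h i j = 0

variable [Fintype V]

/-- A weakly distance-regular digraph is commutative if `p^{h}_{i,j} = p^{h}_{j,i}`
for all two-way distances `h`, `i`, `j`. -/
def WDRDigraph.Commutative (G : WDRDigraph V) : Prop :=
  ∀ h i j : ℕ × ℕ, h ∈ tset G.Adj → i ∈ tset G.Adj → j ∈ tset G.Adj →
    G.p h i j = G.p h j i

/-- A digraph is semicomplete if any two distinct vertices are joined by at least one arc. -/
def Semicomplete (A : V → V → Prop) : Prop :=
  ∀ x y : V, x ≠ y → A x y ∨ A y x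

/-- A digraph is locally semicomplete if the out-neighbourhood and the in-neighbourhood of
every vertex induce semicomplete digraphs. -/
def LocallySemicomplete (A : V → V → Prop) : Prop :=
  ∀ x y z : V, y ≠ z →
    ((A x y → A x z → (A y z ∨ A z y)) ∧ (A y x → A z x → (A y z ∨ A z y)))

/-- A circuit of length `q`, encoded as a function `ZMod q → V` each of whose
consecutive pairs (cyclically) is an arc. -/
def IsCircuit (A : V → V → Prop) (q : ℕ) (c : ZMod q → V) : Prop :=
  ∀ i : ZMod q, A (c i) (c (i + 1))

/-- The arc `(x, y)` (of type `(1, q-1)`) is pure: every circuit of length `q`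
containing it consists of arcs of type `(1, q-1)`. -/
def PureArc (A : V → V → Prop) (q : ℕ) (x y : V) : Prop :=
  ∀ c : ZMod q → V, IsCircuit A q c → c 0 = x → c 1 = y →
    ∀ i : ZMod q, tdist A (c i) (c (i + 1)) = (1, q - 1)

/-- `(1, q-1)` is pure: every arc of type `(1, q-1)` is pure. -/
def TypePure (A : V → V → Prop) (q : ℕ) : Prop :=
  ∀ x y : V, tdist A x y = (1, q - 1) → PureArc A q x y

/-- `(1, q-1)` is mixed: some arc of type `(1, q-1)` is not pure. -/
def TypeMixed (A : V → V → Prop) (q : ℕ) : Prop :=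
  ∃ x y : V, tdist A x y = (1, q - 1) ∧ ¬ PureArc A q x y

/-- The number `k_i` of vertices at two-way distance `i` from `x`
(independent of `x` in a weakly distance-regular digraph). -/
noncomputable def kval (A : V → V → Prop) (i : ℕ × ℕ) (x : V) : ℕ :=
  {y : V | tdist A x y = i}.ncard

/-!
Pick `w` with `y → w → x`. Purity of `(1,2)` on the triangle `x → y → w` gives `∂(w,y) = 2`.
Local semicompleteness at `y` joins the out-neighbours `w, z`, and the arc cannot be `w → z`,
since `x, z` are non-adjacent out-neighbours of `w`; so `z → w → x` forces `i = 2`, and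
`z → w ⇝ y` forces `q ≤ 3`. Finally, if `q = 1` then commutativity of
`p^{(2,2)}_{(1,2),(1,1)}` yields `u` with `∂̃(x,u) = (1,1)` and `∂̃(u,z) = (1,2)`, so again
`x, z` would be non-adjacent out-neighbours of a vertex.
-/

section Digraph

variable {α : Type*} {A : α → α → Prop} {x y z : α}

theorem tdist_eq_iff {a b : ℕ} :
    tdist A x y = (a, b) ↔ ddist A x y = a ∧ ddist A y x = b :=
  Prod.ext_iff

theorem ddist_le_of_hasWalk {n : ℕ} (h : HasWalk A n x y) : ddist A x y ≤ n :=
  Nat.sInf_le h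

theorem ddist_self (x : α) : ddist A x x = 0 :=
  Nat.le_zero.mp (ddist_le_of_hasWalk (rfl : HasWalk A 0 x x))

theorem ne_of_ddist_ne_zero (h : ddist A x y ≠ 0) : x ≠ y := by
  rintro rfl
  exact h (ddist_self x)

-- `sInf ∅ = 0`, so a nonzero distance is realised by a walk even without strong connectivity.
theorem hasWalk_of_ddist_eq {n : ℕ} (h : ddist A x y = n) (hn : n ≠ 0) : HasWalk A n x y := by
  subst h
  refine Nat.sInf_mem (s := {n | HasWalk A n x y}) <| Set.nonempty_iff_ne_empty.mpr fun he => ?_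
  exact hn (by rw [ddist, he, Nat.sInf_empty])

theorem hasWalk_one_iff : HasWalk A 1 x y ↔ A x y :=
  ⟨fun ⟨_, hxu, huy⟩ => (show _ = y from huy) ▸ hxu, fun h => ⟨y, h, rfl⟩⟩

theorem adj_of_ddist_eq_one (h : ddist A x y = 1) : A x y :=
  hasWalk_one_iff.mp (hasWalk_of_ddist_eq h one_ne_zero)

theorem ddist_le_one_of_adj (h : A x y) : ddist A x y ≤ 1 :=
  ddist_le_of_hasWalk (hasWalk_one_iff.mpr h)

theorem LocallySemicomplete.not_adj_of_not_adj (hls : LocallySemicomplete A) {u : α}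
    (hxz : x ≠ z) (hnxz : ¬ A x z) (hnzx : ¬ A z x) (hux : A u x) : ¬ A u z := fun huz =>
  ((hls u x z hxz).1 hux huz).elim hnxz hnzx

theorem TypePure.tdist_of_triangle (hpure : TypePure A 3) {w : α}
    (hxy : tdist A x y = (1, 2)) (hyw : A y w) (hwx : A w x) : tdist A y w = (1, 2) := by
  let c : ZMod 3 → α := ![x, y, w]
  have hc : IsCircuit A 3 c := by
    intro j
    fin_cases j
    exacts [adj_of_ddist_eq_one (tdist_eq_iff.mp hxy).1, hyw, hwx]
  exact hpure x y hxy c hc rfl rfl 1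

end Digraph

theorem WDRDigraph.Commutative.exists_swap {G : WDRDigraph V} (hcomm : G.Commutative)
    {x y z : V} {i j : ℕ × ℕ} (hxy : tdist G.Adj x y = i) (hyz : tdist G.Adj y z = j) :
    ∃ u, tdist G.Adj x u = j ∧ tdist G.Adj u z = i := by
  have hpos : 0 < {u | tdist G.Adj x u = i ∧ tdist G.Adj u z = j}.ncard :=
    (Set.ncard_pos (Set.toFinite _)).mpr ⟨y, hxy, hyz⟩
  rw [G.card_inter, hcomm _ _ _ ⟨x, z, rfl⟩ ⟨x, y, hxy⟩ ⟨y, z, hyz⟩, ← G.card_inter]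
    at hpos
  exact (Set.ncard_pos (Set.toFinite _)).mp hpos

theorem statement4_general (G : WDRDigraph V)
    (hls : LocallySemicomplete G.Adj) (hcomm : G.Commutative)
    (hpure : TypePure G.Adj 3) :
    ∀ (x y z : V) (i q : ℕ), 1 < i → 0 < q →
      tdist G.Adj x y = (1, 2) → tdist G.Adj y z = (1, q) → tdist G.Adj x z = (2, i) →
      i = 2 ∧ (q = 2 ∨ q = 3) := by
  intro x y z i q hi hq hxy hyz hxz
  have dyx := (tdist_eq_iff.mp hxy).2
  obtain ⟨dyz, dzy⟩ := tdist_eq_iff.mp hyz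
  obtain ⟨dxz, dzx⟩ := tdist_eq_iff.mp hxz
  have hxz_ne : x ≠ z := ne_of_ddist_ne_zero (A := G.Adj) (by omega)
  have hnxz : ¬ G.Adj x z := fun h => by have := ddist_le_one_of_adj h; omega
  have hnzx : ¬ G.Adj z x := fun h => by have := ddist_le_one_of_adj h; omega
  obtain ⟨w, hyw, hwx⟩ := hasWalk_of_ddist_eq dyx two_ne_zero
  rw [hasWalk_one_iff] at hwx
  have dwy := (tdist_eq_iff.mp (hpure.tdist_of_triangle hxy hyw hwx)).2
  have hzw : G.Adj z w := by
    refine ((hls y z w fun h => hnzx (h ▸ hwx)).1 (adj_of_ddist_eq_one dyz) hyw).resolve_right ?_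
    exact hls.not_adj_of_not_adj hxz_ne hnxz hnzx hwx
  have hi2 : ddist G.Adj z x ≤ 2 := ddist_le_of_hasWalk ⟨w, hzw, hasWalk_one_iff.mpr hwx⟩
  have hq3 : ddist G.Adj z y ≤ 3 :=
    ddist_le_of_hasWalk ⟨w, hzw, hasWalk_of_ddist_eq dwy two_ne_zero⟩
  have hq1 : q ≠ 1 := by
    rintro rfl
    obtain ⟨u, hxu, huz⟩ := hcomm.exists_swap hxy hyz
    exact hls.not_adj_of_not_adj hxz_ne hnxz hnzx
      (adj_of_ddist_eq_one (tdist_eq_iff.mp hxu).2) (adj_of_ddist_eq_one (tdist_eq_iff.mp huz).1)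
  omega

/-- in a locally semicomplete commutative weakly distance-regular digraph such that
`(1,2)` is pure, if `∂̃(x,y) = (1,2)`, `∂̃(y,z) = (1,q)` and `∂̃(x,z) = (2,i)` with `i > 1`
and `q > 0`, then `i = 2` and `q ∈ {2,3}`. -/
theorem statement4 [Nonempty V] (G : WDRDigraph V)
    (hls : LocallySemicomplete G.Adj) (hcomm : G.Commutative)
    (hpure : TypePure G.Adj 3) :
    ∀ (x y z : V) (i q : ℕ), 1 < i → 0 < q →
      tdist G.Adj x y = (1, 2) → tdist G.Adj y z = (1, q) → tdist G.Adj x z = (2, i) →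
      i = 2 ∧ (q = 2 ∨ q = 3) :=
  statement4_general G hls hcomm hpure
end

section
/- Let Γ be a locally semicomplete commutative weakly distance-regular digraph such that (1,2) is pure, (1,1) ∉ ∂̃(Γ) (i.e. 2 ∉ T), and either (1,3) ∉ ∂̃(Γ) (i.e. 4 ∉ T) or (1,3) is pure. If p^{(2,2)}_{(1,2),(1,2)} ≠ 0 (i.e. Γ_{2,2} ∈ Γ_{1,2}²), then: (1) 2·p^{(1,2)}_{(1,2),(1,2)} = k_{1,2} - 1 and 2·p^{(2,1)}_{(1,2),(1,2)} = k_{1,2} - 1; (2) p^{(2,2)}_{(1,2),(1,2)} = k_{1,2}; (3) k_{2,2} = 1. -/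
variable {V : Type*}

variable [Fintype V]

section Aux

variable [Fintype V] (G : WDRDigraph V)

lemma walk_nonempty (x y : V) : {n : ℕ | HasWalk G.Adj n x y}.Nonempty := by
  obtain ⟨n, hn⟩ := G.strongly_connected x y
  exact ⟨n, hn⟩

lemma hasWalk_ddist (x y : V) : HasWalk G.Adj (ddist G.Adj x y) x y :=
  Nat.sInf_mem (walk_nonempty G x y)

lemma ddist_self_s19 (x : V) : ddist G.Adj x x = 0 :=
  Nat.le_zero.mp (Nat.sInf_le (show HasWalk G.Adj 0 x x from rfl))

lemma tdist_self (x : V) : tdist G.Adj x x = (0, 0) := by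
  simp [tdist, ddist_self_s19]

lemma tdist_swap (x y : V) : tdist G.Adj y x = (tdist G.Adj x y).swap := rfl

lemma tdist_fst {x y : V} {i : ℕ × ℕ} (h : tdist G.Adj x y = i) : ddist G.Adj x y = i.1 := by
  rw [← h]; rfl

lemma tdist_snd {x y : V} {i : ℕ × ℕ} (h : tdist G.Adj x y = i) : ddist G.Adj y x = i.2 := by
  rw [← h]; rfl

lemma ddist_eq_one {x y : V} (h : G.Adj x y) : ddist G.Adj x y = 1 := by
  refine le_antisymm (Nat.sInf_le ⟨y, h, rfl⟩) ?_
  rw [Nat.one_le_iff_ne_zero]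
  intro h0
  have hw := hasWalk_ddist G x y
  rw [h0] at hw
  exact G.loopless x (by rwa [← hw] at h)

lemma adj_of_ddist_one {x y : V} (h : ddist G.Adj x y = 1) : G.Adj x y := by
  have hw := hasWalk_ddist G x y
  rw [h] at hw
  obtain ⟨z, hz, hzy⟩ := hw
  exact hzy ▸ hz

lemma path2_of_ddist_two {x y : V} (h : ddist G.Adj x y = 2) :
    ∃ w, G.Adj x w ∧ G.Adj w y := by
  have hw := hasWalk_ddist G x y
  rw [h] at hw
  obtain ⟨w, hw1, z, hz, hzy⟩ := hw
  exact ⟨w, hw1, hzy ▸ hz⟩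

lemma adj_of_beta {x y : V} (h : tdist G.Adj x y = (1, 2)) : G.Adj x y :=
  adj_of_ddist_one G (tdist_fst G h)

lemma no_digon (h2 : ((1, 1) : ℕ × ℕ) ∉ tset G.Adj) {x y : V}
    (hxy : G.Adj x y) (hyx : G.Adj y x) : False :=
  h2 ⟨x, y, by simp [tdist, ddist_eq_one G hxy, ddist_eq_one G hyx]⟩

lemma tdist_beta_iff {x y : V} : tdist G.Adj x y = (1, 2) ↔ tdist G.Adj y x = (2, 1) := by
  constructor <;> intro h
  · rw [tdist_swap G x y, h]; rfl
  · rw [tdist_swap G y x, h]; rfl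

lemma pure4 (hp4 : TypePure G.Adj 4) {p q r s : V}
    (h01 : G.Adj p q) (h12 : G.Adj q r) (h23 : G.Adj r s) (h30 : G.Adj s p)
    (hpq : tdist G.Adj p q = (1, 3)) :
    tdist G.Adj q r = (1, 3) ∧ tdist G.Adj r s = (1, 3) ∧ tdist G.Adj s p = (1, 3) := by
  set c : ZMod 4 → V := fun i => if i = 0 then p else if i = 1 then q else if i = 2 then r else s
    with hc
  have e0 : c 0 = p := by simp [hc]
  have e1 : c 1 = q := by
    simp only [hc, if_neg (show ¬((1 : ZMod 4) = 0) from by decide), if_pos rfl]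
    simp
  have e2 : c 2 = r := by
    simp only [hc, if_neg (show ¬((2 : ZMod 4) = 0) from by decide),
      if_neg (show ¬((2 : ZMod 4) = 1) from by decide), if_pos rfl]
    simp
  have e3 : c 3 = s := by
    simp only [hc, if_neg (show ¬((3 : ZMod 4) = 0) from by decide),
      if_neg (show ¬((3 : ZMod 4) = 1) from by decide),
      if_neg (show ¬((3 : ZMod 4) = 2) from by decide)]
  have hcirc : IsCircuit G.Adj 4 c := by
    intro i
    rcases (by decide : ∀ j : ZMod 4, j = 0 ∨ j = 1 ∨ j = 2 ∨ j = 3) i with h | h | h | h <;>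
      subst h
    · rw [show ((0 : ZMod 4) + 1) = 1 from by decide, e0, e1]; exact h01
    · rw [show ((1 : ZMod 4) + 1) = 2 from by decide, e1, e2]; exact h12
    · rw [show ((2 : ZMod 4) + 1) = 3 from by decide, e2, e3]; exact h23
    · rw [show ((3 : ZMod 4) + 1) = 0 from by decide, e3, e0]; exact h30
  have key := hp4 p q hpq c hcirc e0 e1
  refine ⟨?_, ?_, ?_⟩
  · have h := key 1
    rw [show ((1 : ZMod 4) + 1) = 2 from by decide, e1, e2] at h
    simpa using h
  · have h := key 2
    rw [show ((2 : ZMod 4) + 1) = 3 from by decide, e2, e3] at h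
    simpa using h
  · have h := key 3
    rw [show ((3 : ZMod 4) + 1) = 0 from by decide, e3, e0] at h
    simpa using h

variable (h2 : ((1, 1) : ℕ × ℕ) ∉ tset G.Adj)
variable (h4 : ((1, 3) : ℕ × ℕ) ∉ tset G.Adj ∨ TypePure G.Adj 4)

include h2 h4 in
lemma step_out {x y y' : V} (hxy : tdist G.Adj x y = (1, 2))
    (hxy' : tdist G.Adj x y' = (1, 2)) (harc : G.Adj y y') :
    tdist G.Adj y y' = (1, 2) := by
  have hd1 : ddist G.Adj y y' = 1 := ddist_eq_one G harc
  obtain ⟨w, hw1, hw2⟩ := path2_of_ddist_two G (tdist_snd G hxy')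
  have haxy : G.Adj x y := adj_of_beta G hxy
  have hle : ddist G.Adj y' y ≤ 3 := Nat.sInf_le ⟨w, hw1, x, hw2, y, haxy, rfl⟩
  have hne1 : ddist G.Adj y' y ≠ 1 := fun h => no_digon G h2 harc (adj_of_ddist_one G h)
  have hne0 : ddist G.Adj y' y ≠ 0 := by
    intro h0
    have hw := hasWalk_ddist G y' y
    rw [h0] at hw
    exact G.loopless y (hw ▸ harc)
  have hcases : ddist G.Adj y' y = 2 ∨ ddist G.Adj y' y = 3 := by omega
  rcases hcases with h | h
  · show (ddist G.Adj y y', ddist G.Adj y' y) = (1, 2)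
    rw [hd1, h]
  · have hb : tdist G.Adj y y' = (1, 3) := by
      show (ddist G.Adj y y', ddist G.Adj y' y) = (1, 3)
      rw [hd1, h]
    rcases h4 with h4' | h4'
    · exact absurd ⟨y, y', hb⟩ h4'
    · have hfin := (pure4 G h4' harc hw1 hw2 haxy hb).2.2
      rw [hxy] at hfin
      exact absurd hfin (by decide)

include h2 h4 in
lemma step_in {x y y' : V} (hyx : tdist G.Adj y x = (1, 2))
    (hy'x : tdist G.Adj y' x = (1, 2)) (harc : G.Adj y y') :
    tdist G.Adj y y' = (1, 2) := by
  have hd1 : ddist G.Adj y y' = 1 := ddist_eq_one G harc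
  have hay'x : G.Adj y' x := adj_of_beta G hy'x
  obtain ⟨s, hs1, hs2⟩ := path2_of_ddist_two G (tdist_snd G hyx)
  have hle : ddist G.Adj y' y ≤ 3 := Nat.sInf_le ⟨x, hay'x, s, hs1, y, hs2, rfl⟩
  have hne1 : ddist G.Adj y' y ≠ 1 := fun h => no_digon G h2 harc (adj_of_ddist_one G h)
  have hne0 : ddist G.Adj y' y ≠ 0 := by
    intro h0
    have hw := hasWalk_ddist G y' y
    rw [h0] at hw
    exact G.loopless y (hw ▸ harc)
  have hcases : ddist G.Adj y' y = 2 ∨ ddist G.Adj y' y = 3 := by omega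
  rcases hcases with h | h
  · show (ddist G.Adj y y', ddist G.Adj y' y) = (1, 2)
    rw [hd1, h]
  · have hb : tdist G.Adj y y' = (1, 3) := by
      show (ddist G.Adj y y', ddist G.Adj y' y) = (1, 3)
      rw [hd1, h]
    rcases h4 with h4' | h4'
    · exact absurd ⟨y, y', hb⟩ h4'
    · have hfin := (pure4 G h4' harc hay'x hs1 hs2 hb).1
      rw [hy'x] at hfin
      exact absurd hfin (by decide)

variable (hls : LocallySemicomplete G.Adj)

include h2 h4 hls in
lemma tri_out {x y y' : V} (hxy : tdist G.Adj x y = (1, 2))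
    (hxy' : tdist G.Adj x y' = (1, 2)) (hne : y ≠ y') :
    tdist G.Adj y y' = (1, 2) ∨ tdist G.Adj y' y = (1, 2) := by
  rcases (hls x y y' hne).1 (adj_of_beta G hxy) (adj_of_beta G hxy') with h | h
  · exact Or.inl (step_out G h2 h4 hxy hxy' h)
  · exact Or.inr (step_out G h2 h4 hxy' hxy h)

include h2 h4 hls in
lemma tri_in {x y y' : V} (hyx : tdist G.Adj y x = (1, 2))
    (hy'x : tdist G.Adj y' x = (1, 2)) (hne : y ≠ y') :
    tdist G.Adj y y' = (1, 2) ∨ tdist G.Adj y' y = (1, 2) := by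
  rcases (hls x y y' hne).2 (adj_of_beta G hyx) (adj_of_beta G hy'x) with h | h
  · exact Or.inl (step_in G h2 h4 hyx hy'x h)
  · exact Or.inr (step_in G h2 h4 hy'x hyx h)

lemma kval_eq (i : ℕ × ℕ) (x : V) : kval G.Adj i x = G.p (0, 0) i i.swap := by
  have hset : {y : V | tdist G.Adj x y = i}
      = {z : V | tdist G.Adj x z = i ∧ tdist G.Adj z x = i.swap} := by
    ext z
    exact ⟨fun h => ⟨h, by rw [tdist_swap G x z, h]⟩, fun h => h.1⟩
  rw [kval, hset, G.card_inter i i.swap x x, tdist_self]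

include h2 h4 hls in
lemma claimC (hp : G.p (2, 2) (1, 2) (1, 2) ≠ 0) {x z : V}
    (hxz : tdist G.Adj x z = (2, 2)) :
    ∀ y, tdist G.Adj x y = (1, 2) → tdist G.Adj y z = (1, 2) := by
  have hS : {w : V | tdist G.Adj x w = (1, 2) ∧ tdist G.Adj w z = (1, 2)}.ncard
      = G.p (2, 2) (1, 2) (1, 2) := by
    rw [G.card_inter, hxz]
  obtain ⟨s, hs⟩ := Set.nonempty_of_ncard_ne_zero (hS ▸ hp)
  have sub : ∀ s', tdist G.Adj x s' = (1, 2) → tdist G.Adj s' z = (1, 2) →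
      ∀ y, tdist G.Adj x y = (1, 2) → ¬ tdist G.Adj y z = (1, 2) →
      ¬ tdist G.Adj s' y = (1, 2) := by
    intro s' hxs' hs'z y hxy hyz hsy
    have hynez : y ≠ z := by
      intro he; rw [he, hxz] at hxy; exact absurd hxy (by decide)
    rcases tri_out G h2 h4 hls hsy hs'z hynez with h | h
    · exact hyz h
    · have hxnez : x ≠ z := by
        intro he; rw [he, tdist_self] at hxz; exact absurd hxz (by decide)
      rcases tri_in G h2 h4 hls hxy h hxnez with h' | h'
      · rw [hxz] at h'; exact absurd h' (by decide)
      · rw [tdist_swap G x z, hxz] at h'; exact absurd h' (by decide)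
  intro y hxy
  by_contra hyz
  have hIns : {w : V | tdist G.Adj x w = (1, 2) ∧ tdist G.Adj w s = (1, 2)}.ncard
      = G.p (1, 2) (1, 2) (1, 2) := by rw [G.card_inter, hs.1]
  have hIny : {w : V | tdist G.Adj x w = (1, 2) ∧ tdist G.Adj w y = (1, 2)}.ncard
      = G.p (1, 2) (1, 2) (1, 2) := by rw [G.card_inter, hxy]
  have hsub1 : {w : V | tdist G.Adj x w = (1, 2) ∧ ¬ tdist G.Adj w z = (1, 2)}
      ⊆ {w : V | tdist G.Adj x w = (1, 2) ∧ tdist G.Adj w s = (1, 2)} := by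
    rintro w ⟨hxw, hwz⟩
    have hwnes : w ≠ s := fun he => hwz (he ▸ hs.2)
    rcases tri_out G h2 h4 hls hxw hs.1 hwnes with h | h
    · exact ⟨hxw, h⟩
    · exact absurd h (sub s hs.1 hs.2 w hxw hwz)
  have hsub2 : insert y {w : V | tdist G.Adj x w = (1, 2) ∧ tdist G.Adj w y = (1, 2)}
      ⊆ {w : V | tdist G.Adj x w = (1, 2) ∧ ¬ tdist G.Adj w z = (1, 2)} := by
    intro w hw
    rcases Set.mem_insert_iff.mp hw with rfl | ⟨hxw, hwy⟩
    · exact ⟨hxy, hyz⟩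
    · exact ⟨hxw, fun hwz => (sub w hxw hwz y hxy hyz) hwy⟩
  have hynot : y ∉ {w : V | tdist G.Adj x w = (1, 2) ∧ tdist G.Adj w y = (1, 2)} := by
    rintro ⟨-, h⟩
    rw [tdist_self] at h
    exact absurd h (by decide)
  have hcard1 := Set.ncard_le_ncard hsub2 (Set.toFinite _)
  rw [Set.ncard_insert_of_notMem hynot (Set.toFinite _), hIny] at hcard1
  have hcard2 := Set.ncard_le_ncard hsub1 (Set.toFinite _)
  rw [hIns] at hcard2
  omega

end Aux

/-- in a locally semicomplete commutative weakly distance-regular digraph where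
`(1,2)` is pure, `2 ∉ T`, and (`4 ∉ T` or `(1,3)` is pure), if `Γ_{2,2} ∈ Γ_{1,2}²` then:
(1) `p^{(1,2)}_{(1,2),(1,2)} = p^{(2,1)}_{(1,2),(1,2)} = (k_{1,2}-1)/2`;
(2) `p^{(2,2)}_{(1,2),(1,2)} = k_{1,2}`; (3) `k_{2,2} = 1`. -/
theorem statement19 [Nonempty V] (G : WDRDigraph V)
    (hls : LocallySemicomplete G.Adj) (hcomm : G.Commutative)
    (hpure : TypePure G.Adj 3)
    (h2 : ((1, 1) : ℕ × ℕ) ∉ tset G.Adj)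
    (h4 : ((1, 3) : ℕ × ℕ) ∉ tset G.Adj ∨ TypePure G.Adj 4)
    (hp : G.p (2, 2) (1, 2) (1, 2) ≠ 0) :
    ∀ x : V,
      (2 * G.p (1, 2) (1, 2) (1, 2) = kval G.Adj (1, 2) x - 1 ∧
        2 * G.p (2, 1) (1, 2) (1, 2) = kval G.Adj (1, 2) x - 1) ∧
      G.p (2, 2) (1, 2) (1, 2) = kval G.Adj (1, 2) x ∧
      kval G.Adj (2, 2) x = 1 := by
  intro x
  -- membership facts
  have h22mem : ((2, 2) : ℕ × ℕ) ∈ tset G.Adj := by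
    by_contra hn; exact hp (G.p_not_in _ _ _ (Or.inl hn))
  have hbmem : ((1, 2) : ℕ × ℕ) ∈ tset G.Adj := by
    by_contra hn; exact hp (G.p_not_in _ _ _ (Or.inr (Or.inl hn)))
  have h00mem : ((0, 0) : ℕ × ℕ) ∈ tset G.Adj := ⟨x, x, tdist_self G x⟩
  obtain ⟨x₀, z₀, h0⟩ := id h22mem
  obtain ⟨a₀, b₀, hab⟩ := id hbmem
  have hgmem : ((2, 1) : ℕ × ℕ) ∈ tset G.Adj := ⟨b₀, a₀, by rw [tdist_swap G a₀ b₀, hab]; rfl⟩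
  -- kval is constant
  have hk22 : ∀ v : V, kval G.Adj (2, 2) v = G.p (0, 0) (2, 2) (2, 2) := by
    intro v; rw [kval_eq]; rfl
  have hkb : ∀ v : V, kval G.Adj (1, 2) v = G.p (0, 0) (1, 2) (2, 1) := by
    intro v; rw [kval_eq]; rfl
  have hkg : ∀ v : V, kval G.Adj (2, 1) v = G.p (0, 0) (2, 1) (1, 2) := by
    intro v; rw [kval_eq]; rfl
  have hKK : G.p (0, 0) (2, 1) (1, 2) = G.p (0, 0) (1, 2) (2, 1) :=
    hcomm (0, 0) (2, 1) (1, 2) h00mem hgmem hbmem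
  -- obtain z with tdist x z = (2,2)
  obtain ⟨z, hxz⟩ : ∃ z, tdist G.Adj x z = (2, 2) := by
    have h1 : kval G.Adj (2, 2) x₀ ≠ 0 := by
      rw [kval]
      exact ((Set.ncard_pos (Set.toFinite _)).mpr ⟨z₀, h0⟩).ne'
    have h2' : ({y : V | tdist G.Adj x y = (2, 2)}).ncard ≠ 0 := by
      rw [show ({y : V | tdist G.Adj x y = (2, 2)}).ncard = kval G.Adj (2, 2) x from rfl,
        hk22 x, ← hk22 x₀]
      exact h1
    obtain ⟨z, hz⟩ := Set.nonempty_of_ncard_ne_zero h2'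
    exact ⟨z, hz⟩
  -- obtain y₀ with tdist x y₀ = (1,2)
  obtain ⟨y₀, hy₀⟩ : ∃ y₀, tdist G.Adj x y₀ = (1, 2) := by
    have h1 : kval G.Adj (1, 2) a₀ ≠ 0 := by
      rw [kval]
      exact ((Set.ncard_pos (Set.toFinite _)).mpr ⟨b₀, hab⟩).ne'
    have h2' : ({y : V | tdist G.Adj x y = (1, 2)}).ncard ≠ 0 := by
      rw [show ({y : V | tdist G.Adj x y = (1, 2)}).ncard = kval G.Adj (1, 2) x from rfl,
        hkb x, ← hkb a₀]
      exact h1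
    obtain ⟨y, hy⟩ := Set.nonempty_of_ncard_ne_zero h2'
    exact ⟨y, hy⟩
  have hzx : tdist G.Adj z x = (2, 2) := by rw [tdist_swap G x z, hxz]; rfl
  have hC := claimC G h2 h4 hls hp hxz
  have hC' := claimC G h2 h4 hls hp hzx
  have hy₀z : tdist G.Adj y₀ z = (1, 2) := hC y₀ hy₀
  have hy₀x : tdist G.Adj y₀ x = (2, 1) := (tdist_beta_iff G).mp hy₀
  -- part 2
  have part2 : G.p (2, 2) (1, 2) (1, 2) = kval G.Adj (1, 2) x := by
    have hci := G.card_inter (1, 2) (1, 2) x z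
    rw [hxz] at hci
    have hseteq : {w : V | tdist G.Adj x w = (1, 2) ∧ tdist G.Adj w z = (1, 2)}
        = {w : V | tdist G.Adj x w = (1, 2)} := by
      ext w; exact ⟨fun h => h.1, fun h => ⟨h, hC w h⟩⟩
    rw [← hci, hseteq, kval]
  -- part 3
  have part3 : kval G.Adj (2, 2) x = 1 := by
    have hsing : {z' : V | tdist G.Adj x z' = (2, 2)} = {z} := by
      ext z'
      simp only [Set.mem_singleton_iff, Set.mem_setOf_eq]
      constructor
      · intro hz'
        by_contra hne
        have hy₀z' : tdist G.Adj y₀ z' = (1, 2) := claimC G h2 h4 hls hp hz' y₀ hy₀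
        rcases tri_out G h2 h4 hls hy₀z' hy₀z hne with h | h
        · have hz'x : tdist G.Adj z' x = (2, 2) := by rw [tdist_swap G x z', hz']; rfl
          have hfin := claimC G h2 h4 hls hp hz'x z h
          rw [tdist_swap G x z, hxz] at hfin
          exact absurd hfin (by decide)
        · have hfin := hC' z' h
          rw [tdist_swap G x z', hz'] at hfin
          exact absurd hfin (by decide)
      · rintro rfl; exact hxz
    rw [kval, hsing, Set.ncard_singleton]
  -- set equalities F(x) = F⁻(z) and F(z) = F⁻(x)
  have hFz : {w : V | tdist G.Adj x w = (1, 2)} = {w : V | tdist G.Adj w z = (1, 2)} := by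
    refine Set.eq_of_subset_of_ncard_le (fun w hw => hC w hw) ?_ (Set.toFinite _)
    have e1 : {w : V | tdist G.Adj w z = (1, 2)} = {w : V | tdist G.Adj z w = (2, 1)} := by
      ext w; exact tdist_beta_iff G
    rw [e1, show ({w : V | tdist G.Adj z w = (2, 1)}).ncard = kval G.Adj (2, 1) z from rfl,
      show ({w : V | tdist G.Adj x w = (1, 2)}).ncard = kval G.Adj (1, 2) x from rfl,
      hkg z, hkb x]
    exact le_of_eq hKK
  have hFz' : {w : V | tdist G.Adj z w = (1, 2)} = {w : V | tdist G.Adj w x = (1, 2)} := by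
    refine Set.eq_of_subset_of_ncard_le (fun w hw => hC' w hw) ?_ (Set.toFinite _)
    have e1 : {w : V | tdist G.Adj w x = (1, 2)} = {w : V | tdist G.Adj x w = (2, 1)} := by
      ext w; exact tdist_beta_iff G
    rw [e1, show ({w : V | tdist G.Adj x w = (2, 1)}).ncard = kval G.Adj (2, 1) x from rfl,
      show ({w : V | tdist G.Adj z w = (1, 2)}).ncard = kval G.Adj (1, 2) z from rfl,
      hkg x, hkb z]
    exact le_of_eq hKK
  -- a = p β (2,1) β
  have hIns : ({w : V | tdist G.Adj x w = (1, 2) ∧ tdist G.Adj w y₀ = (1, 2)}).ncard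
      = G.p (1, 2) (1, 2) (1, 2) := by rw [G.card_inter, hy₀]
  have hJ : ({w : V | tdist G.Adj y₀ w = (2, 1) ∧ tdist G.Adj w z = (1, 2)}).ncard
      = G.p (1, 2) (2, 1) (1, 2) := by rw [G.card_inter, hy₀z]
  have hseteq2 : {w : V | tdist G.Adj x w = (1, 2) ∧ tdist G.Adj w y₀ = (1, 2)}
      = {w : V | tdist G.Adj y₀ w = (2, 1) ∧ tdist G.Adj w z = (1, 2)} := by
    ext w
    simp only [Set.mem_setOf_eq]
    constructor
    · rintro ⟨hxw, hwy⟩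
      exact ⟨(tdist_beta_iff G).mp hwy, hC w hxw⟩
    · rintro ⟨hyw, hwz⟩
      have hxw : w ∈ {w : V | tdist G.Adj x w = (1, 2)} := by
        rw [hFz]; exact hwz
      exact ⟨hxw, (tdist_beta_iff G).mpr hyw⟩
  have haJ : G.p (1, 2) (1, 2) (1, 2) = G.p (1, 2) (2, 1) (1, 2) := by
    rw [← hIns, ← hJ, hseteq2]
  have hab' : G.p (1, 2) (2, 1) (1, 2) = G.p (1, 2) (1, 2) (2, 1) :=
    hcomm (1, 2) (2, 1) (1, 2) hbmem hgmem hbmem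
  -- partition of F(x)
  have hO : ({w : V | tdist G.Adj x w = (1, 2) ∧ tdist G.Adj w y₀ = (2, 1)}).ncard
      = G.p (1, 2) (1, 2) (2, 1) := by rw [G.card_inter, hy₀]
  have hsetpart : {w : V | tdist G.Adj x w = (1, 2)}
      = insert y₀ ({w : V | tdist G.Adj x w = (1, 2) ∧ tdist G.Adj w y₀ = (1, 2)}
        ∪ {w : V | tdist G.Adj x w = (1, 2) ∧ tdist G.Adj w y₀ = (2, 1)}) := by
    ext w
    simp only [Set.mem_insert_iff, Set.mem_union, Set.mem_setOf_eq]
    constructor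
    · intro hxw
      by_cases hwy : w = y₀
      · exact Or.inl hwy
      · rcases tri_out G h2 h4 hls hxw hy₀ hwy with h | h
        · exact Or.inr (Or.inl ⟨hxw, h⟩)
        · exact Or.inr (Or.inr ⟨hxw, (tdist_beta_iff G).mp h⟩)
    · rintro (rfl | ⟨h, -⟩ | ⟨h, -⟩)
      · exact hy₀
      · exact h
      · exact h
  have hnotmem : y₀ ∉ ({w : V | tdist G.Adj x w = (1, 2) ∧ tdist G.Adj w y₀ = (1, 2)}
      ∪ {w : V | tdist G.Adj x w = (1, 2) ∧ tdist G.Adj w y₀ = (2, 1)}) := by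
    simp only [Set.mem_union, Set.mem_setOf_eq]
    rintro (⟨-, h⟩ | ⟨-, h⟩) <;> (rw [tdist_self] at h; exact absurd h (by decide))
  have hdisj : Disjoint {w : V | tdist G.Adj x w = (1, 2) ∧ tdist G.Adj w y₀ = (1, 2)}
      {w : V | tdist G.Adj x w = (1, 2) ∧ tdist G.Adj w y₀ = (2, 1)} := by
    rw [Set.disjoint_left]
    rintro w ⟨-, h1⟩ ⟨-, h2⟩
    rw [h1] at h2
    exact absurd h2 (by decide)
  have hcount : kval G.Adj (1, 2) x
      = G.p (1, 2) (1, 2) (1, 2) + G.p (1, 2) (1, 2) (2, 1) + 1 := by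
    rw [kval, hsetpart, Set.ncard_insert_of_notMem hnotmem (Set.toFinite _),
      Set.ncard_union_eq hdisj (Set.toFinite _) (Set.toFinite _), hIns, hO]
  -- p (2,1) β β
  have hP21 : ({w : V | tdist G.Adj y₀ w = (1, 2) ∧ tdist G.Adj w x = (1, 2)}).ncard
      = G.p (2, 1) (1, 2) (1, 2) := by rw [G.card_inter, hy₀x]
  have hlast : ({w : V | tdist G.Adj y₀ w = (1, 2) ∧ tdist G.Adj w z = (2, 1)}).ncard
      = G.p (1, 2) (1, 2) (2, 1) := by rw [G.card_inter, hy₀z]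
  have hseteq3 : {w : V | tdist G.Adj y₀ w = (1, 2) ∧ tdist G.Adj w x = (1, 2)}
      = {w : V | tdist G.Adj y₀ w = (1, 2) ∧ tdist G.Adj w z = (2, 1)} := by
    ext w
    simp only [Set.mem_setOf_eq]
    constructor
    · rintro ⟨h1, h2⟩
      have hzw : w ∈ {w : V | tdist G.Adj z w = (1, 2)} := by
        rw [hFz']; exact h2
      exact ⟨h1, (tdist_beta_iff G).mp hzw⟩
    · rintro ⟨h1, h2⟩
      have hzw : tdist G.Adj z w = (1, 2) := (tdist_beta_iff G).mpr h2
      have hwx : w ∈ {w : V | tdist G.Adj w x = (1, 2)} := by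
        rw [← hFz']; exact hzw
      exact ⟨h1, hwx⟩
  have hP21b : G.p (2, 1) (1, 2) (1, 2) = G.p (1, 2) (1, 2) (2, 1) := by
    rw [← hP21, ← hlast, hseteq3]
  refine ⟨⟨?_, ?_⟩, part2, part3⟩
  · omega
  · omega
end
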